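/- Let D : E ⇀ F be a closed densely defined operator between Hilbert spaces. If there exists a bounded operator K : E → G (G a Hilbert space) such that K(1+D*D)^{-1/2} is compact and there is C > 0 with ‖x‖ ≤ C(‖Kx‖ + ‖Dx‖) for all x in a core of D, then D is left-Fredholm. -/

import Mathlib

open Filter Topology

noncomputable section

variable {E F G : Type*}
  [NormedAddCommGroup E] [InnerProductSpace ℂ E] [CompleteSpace E]
  [NormedAddCommGroup F] [InnerProductSpace ℂ F] [CompleteSpace F]
  [NormedAddCommGroup G] [InnerProductSpace ℂ G] [CompleteSpace G]

/-- `D`, viewed as an operator from its domain with the graph norm, is left-Fredholm: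
finite-dimensional kernel and closed range (equivalently, left-invertible modulo compacts). -/
def LeftFredholm (D : E →ₗ.[ℂ] F) : Prop :=
  FiniteDimensional ℂ (LinearMap.ker D.toFun) ∧
    IsClosed (Set.range fun x : D.domain => D x)

/-- `R` is the bounded operator `(1 + D†D)^(-1/2)`. -/
structure IsSqrtResolvent (D : E →ₗ.[ℂ] F) (R : E →L[ℂ] E) : Prop where
  mem : ∀ x, R x ∈ D.domain
  graph_isometry : ∀ x : E, ‖x‖ ^ 2 = ‖R x‖ ^ 2 + ‖D ⟨R x, mem x⟩‖ ^ 2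
  surj : ∀ y ∈ D.domain, ∃ x, R x = y
  selfAdjoint : IsSelfAdjoint R
  pos : ∀ x, 0 ≤ (inner ℂ (R x) x : ℂ).re

/-- A core of `D`: a subspace of the domain of `D` that is dense in the graph norm. -/
def IsCore (D : E →ₗ.[ℂ] F) (S : Submodule ℂ E) : Prop :=
  (S : Set E) ⊆ D.domain ∧
    ∀ x : D.domain, ∀ ε > (0 : ℝ), ∃ y : D.domain, (y : E) ∈ S ∧
      ‖(x : E) - y‖ < ε ∧ ‖D x - D y‖ < ε

set_option maxHeartbeats 1000000 in
private lemma cauchy_aux {c : ℝ} (hc : 0 < c) (T : E →L[ℂ] F) (J : E →L[ℂ] G)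
    (h : ∀ z, ‖z‖ ≤ c * (‖J z‖ + ‖T z‖)) (hJ : IsCompactOperator J)
    {M : ℝ} (u : ℕ → E) (hu : ∀ n, ‖u n‖ ≤ M)
    (hTu : Tendsto (fun n => ‖T (u n)‖) atTop (𝓝 0)) :
    ∃ x : E, ∃ φ : ℕ → ℕ, StrictMono φ ∧ Tendsto (u ∘ φ) atTop (𝓝 x) := by
  have hJ' : IsCompactOperator (J : E →ₗ[ℂ] G) := hJ
  have hK : IsCompact (closure ((J : E →ₗ[ℂ] G) '' Metric.closedBall 0 M)) :=
    hJ'.isCompact_closure_image_of_bounded Metric.isBounded_closedBall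
  have hmem : ∀ n, J (u n) ∈ closure ((J : E →ₗ[ℂ] G) '' Metric.closedBall 0 M) := fun n =>
    subset_closure ⟨u n, by simpa [Metric.mem_closedBall, dist_zero_right] using hu n, rfl⟩
  obtain ⟨w, -, φ, hφ, hconv⟩ := hK.tendsto_subseq hmem
  have hcs : CauchySeq (fun n => J (u (φ n))) := hconv.cauchySeq
  have hT' : Tendsto (fun n => ‖T (u (φ n))‖) atTop (𝓝 0) := hTu.comp hφ.tendsto_atTop
  have hcu : CauchySeq (u ∘ φ) := by
    rw [Metric.cauchySeq_iff]
    intro ε hε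
    have hε3 : 0 < ε / (3 * c) := by positivity
    obtain ⟨N1, hN1⟩ := Metric.cauchySeq_iff.1 hcs (ε / (3 * c)) hε3
    obtain ⟨N2, hN2⟩ := (Metric.tendsto_atTop.1 hT' (ε / (3 * c)) hε3)
    refine ⟨max N1 N2, fun m hm n hn => ?_⟩
    have h1 := hN1 m (le_trans (le_max_left _ _) hm) n (le_trans (le_max_left _ _) hn)
    have h2 := hN2 m (le_trans (le_max_right _ _) hm)
    have h3 := hN2 n (le_trans (le_max_right _ _) hn)
    rw [dist_eq_norm] at h1 ⊢
    simp only [Real.dist_eq, sub_zero, abs_of_nonneg (norm_nonneg _)] at h2 h3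
    have key := h (u (φ m) - u (φ n))
    have hJsub : ‖J (u (φ m) - u (φ n))‖ = ‖J (u (φ m)) - J (u (φ n))‖ := by rw [map_sub]
    have hTsub : ‖T (u (φ m) - u (φ n))‖ ≤ ‖T (u (φ m))‖ + ‖T (u (φ n))‖ := by
      rw [map_sub]; exact norm_sub_le _ _
    calc ‖(u ∘ φ) m - (u ∘ φ) n‖ ≤ c * (‖J (u (φ m)) - J (u (φ n))‖ +
          (‖T (u (φ m))‖ + ‖T (u (φ n))‖)) := by
          simp only [Function.comp]
          calc ‖u (φ m) - u (φ n)‖ ≤ c * (‖J (u (φ m) - u (φ n))‖ + ‖T (u (φ m) - u (φ n))‖) :=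
                key
            _ ≤ _ := by rw [hJsub]; exact mul_le_mul_of_nonneg_left (by linarith) hc.le
      _ < c * (ε / (3 * c) + (ε / (3 * c) + ε / (3 * c))) := by
          apply mul_lt_mul_of_pos_left _ hc
          linarith
      _ = ε := by field_simp; ring
  obtain ⟨x, hx⟩ := cauchySeq_tendsto_of_complete hcu
  exact ⟨x, φ, hφ, hx⟩

set_option maxHeartbeats 1000000 in
private lemma fredholm_aux {c : ℝ} (hc : 0 < c) (T : E →L[ℂ] F) (J : E →L[ℂ] G)
    (hJ : IsCompactOperator J) (h : ∀ z, ‖z‖ ≤ c * (‖J z‖ + ‖T z‖)) :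
    FiniteDimensional ℂ (T.ker) ∧ IsClosed (Set.range T) := by
  haveI : CompleteSpace (T.ker) := T.isClosed_ker.completeSpace_coe
  constructor
  · -- finite-dimensional kernel
    apply FiniteDimensional.of_isCompact_closedBall₀ ℂ (r := 1) one_pos
    apply IsSeqCompact.isCompact
    intro v hv
    have hv' : ∀ n, ‖((v n : E))‖ ≤ 1 := fun n => by
      simpa [Metric.mem_closedBall, dist_zero_right] using hv n
    have hTv : Tendsto (fun n => ‖T ((v n : E))‖) atTop (𝓝 0) := by
      have : ∀ n, ‖T ((v n : E))‖ = 0 := fun n => by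
        simp [(v n).2]
      simpa [this] using tendsto_const_nhds
    obtain ⟨x, φ, hφ, hconv⟩ := cauchy_aux hc T J h hJ (fun n => (v n : E)) hv' hTv
    have hxker : x ∈ T.ker := by
      apply T.isClosed_ker.mem_of_tendsto hconv
      exact Eventually.of_forall fun n => (v (φ n)).2
    have hxnorm : ‖x‖ ≤ 1 := by
      apply le_of_tendsto (hconv.norm)
      exact Eventually.of_forall fun n => hv' (φ n)
    refine ⟨⟨x, hxker⟩, ?_, φ, hφ, ?_⟩
    · simpa [Metric.mem_closedBall, dist_zero_right] using hxnorm
    · rw [tendsto_subtype_rng]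
      exact hconv
  · -- closed range
    set N := (T.ker)ᗮ with hN
    have hNclosed : IsClosed (N : Set E) := (T.ker).isClosed_orthogonal
    haveI : CompleteSpace N := hNclosed.completeSpace_coe
    -- bounded below on N
    have key : ∃ c' : ℝ, 0 < c' ∧ ∀ x ∈ N, ‖x‖ ≤ c' * ‖T x‖ := by
      by_contra hcon
      push_neg at hcon
      have hex : ∀ n : ℕ, ∃ x ∈ N, ‖x‖ > ((n : ℝ) + 1) * ‖T x‖ := by
        intro n
        obtain ⟨x, hxN, hx⟩ := hcon ((n : ℝ) + 1) (by positivity)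
        exact ⟨x, hxN, hx⟩
      choose x hxN hx using hex
      have hxne : ∀ n, x n ≠ 0 := by
        intro n hn
        have := hx n
        rw [hn] at this
        simp at this
      set u : ℕ → E := fun n => ((‖x n‖ : ℂ))⁻¹ • x n with hu_def
      have hunorm : ∀ n, ‖u n‖ = 1 := by
        intro n
        have : ‖x n‖ ≠ 0 := norm_ne_zero_iff.2 (hxne n)
        simp [hu_def, norm_smul, this]
      have huN : ∀ n, u n ∈ N := fun n => N.smul_mem _ (hxN n)
      have hTu : ∀ n, ‖T (u n)‖ ≤ 1 / ((n : ℝ) + 1) := by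
        intro n
        have hxpos : 0 < ‖x n‖ := norm_pos_iff.2 (hxne n)
        have h1 : ‖T (u n)‖ = ‖x n‖⁻¹ * ‖T (x n)‖ := by
          simp [hu_def, map_smul, norm_smul]
        have h2 : ((n : ℝ) + 1) * ‖T (x n)‖ ≤ ‖x n‖ := (hx n).le
        rw [h1, inv_mul_le_iff₀ hxpos, mul_one_div, le_div_iff₀ (by positivity : (0:ℝ) < (n:ℝ)+1)]
        nlinarith [norm_nonneg (T (x n))]
      have hTu0 : Tendsto (fun n => ‖T (u n)‖) atTop (𝓝 0) := by
        apply squeeze_zero (fun n => norm_nonneg _) hTu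
        exact tendsto_one_div_add_atTop_nhds_zero_nat
      obtain ⟨y, φ, hφ, hconv⟩ := cauchy_aux hc T J h hJ u (fun n => (hunorm n).le) hTu0
      have hynorm : ‖y‖ = 1 := by
        have := (hconv.norm)
        simp only [Function.comp, hunorm] at this
        exact (tendsto_nhds_unique tendsto_const_nhds this).symm
      have hyN : y ∈ N := hNclosed.mem_of_tendsto hconv
        (Eventually.of_forall fun n => huN (φ n))
      have hyker : y ∈ T.ker := by
        rw [LinearMap.mem_ker]
        have h1 : Tendsto (fun n => T (u (φ n))) atTop (𝓝 (T y)) :=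
          (T.continuous.tendsto y).comp hconv
        have h2 : Tendsto (fun n => T (u (φ n))) atTop (𝓝 (0 : F)) := by
          rw [tendsto_zero_iff_norm_tendsto_zero]
          exact hTu0.comp hφ.tendsto_atTop
        exact tendsto_nhds_unique h1 h2
      have : y = 0 := inner_self_eq_zero.1 ((Submodule.mem_orthogonal _ y).1 hyN y hyker)
      rw [this] at hynorm
      simp at hynorm
    obtain ⟨c', hc', hkey⟩ := key
    -- range T = T '' N
    have hrange : Set.range T = T '' (N : Set E) := by
      ext y
      constructor
      · rintro ⟨x, rfl⟩
        obtain ⟨k, hk, n, hn, rfl⟩ := (T.ker).exists_add_mem_mem_orthogonal x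
        refine ⟨n, hn, ?_⟩
        rw [map_add, (show T k = 0 from LinearMap.mem_ker.1 hk), zero_add]
      · rintro ⟨x, -, rfl⟩
        exact ⟨x, rfl⟩
    rw [hrange]
    -- T restricted to N is antilipschitz
    set f : N →L[ℂ] F := T.comp N.subtypeL with hf
    have hanti : AntilipschitzWith c'.toNNReal f := by
      apply AntilipschitzWith.of_le_mul_dist
      intro a b
      simp only [dist_eq_norm]
      rw [Real.coe_toNNReal c' hc'.le]
      calc ‖a - b‖ = ‖((a - b : N) : E)‖ := rfl
        _ ≤ c' * ‖T ((a - b : N) : E)‖ := hkey _ (a - b).2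
        _ = c' * ‖f (a - b)‖ := rfl
        _ = c' * ‖f a - f b‖ := by rw [map_sub]
    have hclosedrange : IsClosed (Set.range f) := hanti.isClosed_range f.uniformContinuous
    have : T '' (N : Set E) = Set.range f := by
      rw [hf]
      ext y
      simp only [Set.mem_image, Set.mem_range]
      constructor
      · rintro ⟨x, hx, rfl⟩; exact ⟨⟨x, hx⟩, rfl⟩
      · rintro ⟨⟨x, hx⟩, rfl⟩; exact ⟨x, hx, rfl⟩
    rw [this]
    exact hclosedrange

set_option maxHeartbeats 1000000 in
/-- If there is a bounded `K : E → G` with `K (1 + D†D)^(-1/2)` compact and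
`‖x‖ ≤ C (‖K x‖ + ‖D x‖)` on a core of `D`, then `D` is left-Fredholm. -/
theorem left_fredholm_of_bound
    (D : E →ₗ.[ℂ] F) (hdense : Dense (D.domain : Set E)) (hclosed : D.IsClosed)
    (R : E →L[ℂ] E) (hR : IsSqrtResolvent D R)
    (K : E →L[ℂ] G) (hKcomp : IsCompactOperator (fun x => K (R x)))
    (S : Submodule ℂ E) (hcore : IsCore D S) (C : ℝ) (hC : 0 < C)
    (hbound : ∀ x : D.domain, (x : E) ∈ S → ‖(x : E)‖ ≤ C * (‖K x‖ + ‖D x‖)) :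
    LeftFredholm D := by
  -- extend the bound from the core to the whole domain
  have hb : ∀ x : D.domain, ‖(x : E)‖ ≤ C * (‖K x‖ + ‖D x‖) := by
    intro x
    apply le_of_forall_pos_le_add
    intro ε hε
    set P : ℝ := 1 + C * (‖K‖ + 1) with hP
    have hPpos : 0 < P := by positivity
    set δ : ℝ := ε / P with hδ
    have hδpos : 0 < δ := by positivity
    obtain ⟨y, hyS, hxy, hDxy⟩ := hcore.2 x δ hδpos
    have hKy : ‖K y‖ ≤ ‖K x‖ + ‖K‖ * δ := by
      have h2 : ‖K (y : E)‖ ≤ ‖K (x : E)‖ + ‖K ((y : E) - x)‖ := by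
        calc ‖K (y : E)‖ = ‖K (x : E) + (K (y : E) - K (x : E))‖ := by rw [add_sub_cancel]
          _ ≤ ‖K (x : E)‖ + ‖K (y : E) - K (x : E)‖ := norm_add_le _ _
          _ = ‖K (x : E)‖ + ‖K ((y : E) - x)‖ := by rw [map_sub]
      have h3 : ‖(y : E) - x‖ ≤ δ := by rw [norm_sub_rev]; exact hxy.le
      have h4 := K.le_opNorm ((y : E) - x)
      have h5 : ‖K‖ * ‖(y : E) - x‖ ≤ ‖K‖ * δ :=
        mul_le_mul_of_nonneg_left h3 (norm_nonneg _)
      linarith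
    have hDy : ‖D y‖ ≤ ‖D x‖ + δ := by
      have h2 := norm_add_le (D x) (D y - D x)
      simp only [add_sub_cancel] at h2
      rw [norm_sub_rev] at hDxy
      linarith
    have hy := hbound y hyS
    have hxn : ‖(x : E)‖ ≤ δ + ‖(y : E)‖ := by
      have := norm_add_le ((x : E) - y) (y : E)
      simp only [sub_add_cancel] at this
      linarith
    have hCmul : C * (‖K y‖ + ‖D y‖) ≤ C * ((‖K x‖ + ‖K‖ * δ) + (‖D x‖ + δ)) := by
      apply mul_le_mul_of_nonneg_left _ hC.le
      linarith
    have hfin : δ + C * ((‖K x‖ + ‖K‖ * δ) + (‖D x‖ + δ)) = C * (‖K x‖ + ‖D x‖) + δ * P := by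
      rw [hP]; ring
    have hδP : δ * P = ε := by rw [hδ]; field_simp
    linarith
  -- the linear map z ↦ ⟨R z, _⟩ into the domain
  let φ : E →ₗ[ℂ] D.domain :=
    { toFun := fun z => ⟨R z, hR.mem z⟩
      map_add' := fun z w => Subtype.ext (by simp)
      map_smul' := fun a z => Subtype.ext (by simp) }
  let L : E →ₗ[ℂ] F := D.toFun.comp φ
  have hLval : ∀ z : E, L z = D ⟨R z, hR.mem z⟩ := fun z => rfl
  have hLbound : ∀ z : E, ‖L z‖ ≤ 1 * ‖z‖ := by
    intro z
    rw [one_mul, hLval]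
    have e := hR.graph_isometry z
    nlinarith [norm_nonneg (D (⟨R z, hR.mem z⟩ : D.domain)), norm_nonneg z, norm_nonneg (R z)]
  let T : E →L[ℂ] F := ⟨L, AddMonoidHomClass.continuous_of_bound L 1 hLbound⟩
  have hTval : ∀ z : E, T z = D ⟨R z, hR.mem z⟩ := fun z => rfl
  let J : E →L[ℂ] G := K.comp R
  have hJ : IsCompactOperator (J : E →L[ℂ] G) := hKcomp
  -- master estimate
  have h1 : ∀ z : E, ‖z‖ ≤ (C + 1) * (‖J z‖ + ‖T z‖) := by
    intro z
    have e := hR.graph_isometry z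
    have h2 : ‖z‖ ≤ ‖R z‖ + ‖T z‖ := by
      rw [hTval]
      nlinarith [norm_nonneg (D (⟨R z, hR.mem z⟩ : D.domain)), norm_nonneg z, norm_nonneg (R z)]
    have h3 : ‖R z‖ ≤ C * (‖J z‖ + ‖T z‖) := by
      have := hb ⟨R z, hR.mem z⟩
      rw [hTval]
      exact this
    have h4 : 0 ≤ ‖J z‖ := norm_nonneg _
    have h5 : 0 ≤ ‖T z‖ := norm_nonneg _
    nlinarith
  obtain ⟨hfin, hcl⟩ := fredholm_aux (by positivity : (0:ℝ) < C + 1) T J hJ h1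
  constructor
  · -- kernel
    have hker : ∀ z ∈ T.ker, φ z ∈ LinearMap.ker D.toFun := by
      intro z hz
      rw [LinearMap.mem_ker] at hz ⊢
      exact hz
    set ψ : T.ker →ₗ[ℂ] LinearMap.ker D.toFun := φ.restrict hker with hψdef
    have hsurj : Function.Surjective ψ := by
      rintro ⟨y, hy⟩
      obtain ⟨z, hz⟩ := hR.surj (y : E) y.2
      have hφz : φ z = y := Subtype.ext hz
      have hzker : z ∈ T.ker := by
        rw [LinearMap.mem_ker]
        show D.toFun (φ z) = 0
        rw [hφz]
        exact hy
      exact ⟨⟨z, hzker⟩, Subtype.ext hφz⟩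
    exact Module.Finite.of_surjective ψ hsurj
  · -- range
    have : (Set.range fun x : D.domain => D x) = Set.range T := by
      ext w
      constructor
      · rintro ⟨x, rfl⟩
        obtain ⟨z, hz⟩ := hR.surj (x : E) x.2
        refine ⟨z, ?_⟩
        rw [hTval]
        congr 1
        exact Subtype.ext hz
      · rintro ⟨z, rfl⟩
        exact ⟨⟨R z, hR.mem z⟩, (hTval z).symm⟩
    rw [this]
    exact hcl

end
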